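/- Let A_Γ be a T-algebra on Γ = 2^{<ω₁}, let r ∈ 2^{ω}, and let X_r = {x ∈ 2^{ω₁} : r ⊆ x}. For each x ∈ X_r let Y_x be the set ω₁ with the subspace topology inherited from (ω₁+1, τ(A_{Γ,x})), and for n ∈ ℕ let n̄ ∈ ∏_{x∈X_r} Y_x be the point with constant value n. Then the set {n̄ : n ∈ ℕ} has no accumulation point in the product space ∏_{x∈X_r} Y_x; in particular this product is not countably compact. -/

import Mathlib

open Set

noncomputable section

/-- The least uncountable ordinal `ω₁`. -/
def omega1 : Ordinal := (Cardinal.aleph 1).ord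

/-- `⋃_{γ ∈ F} a_γ` for a finite set `F` of indices. -/
def unionFin (a : Ordinal → Set ℕ) (F : Finset Ordinal) : Set ℕ :=
  ⋃ γ ∈ F, a γ

/-- A sequence of subsets of `ℕ`, with indices from a (downward closed) domain `D`
of ordinals, is coherent if for all `α ≤ β` in the domain there is a finite `F ⊆ α`
with `a α ∩ a β ⊆ ⋃_{γ∈F} a γ` or `a α ⊆ a β ∪ ⋃_{γ∈F} a γ`. -/
def CoherentOn (D : Set Ordinal) (a : Ordinal → Set ℕ) : Prop :=
  ∀ α β : Ordinal, α ≤ β → β ∈ D →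
    ∃ F : Finset Ordinal, (∀ γ ∈ F, γ < α) ∧
      (a α ∩ a β ⊆ unionFin a F ∨ a α ⊆ a β ∪ unionFin a F)

/-- Properness: no `a β` is contained in a finite union of earlier terms. -/
def ProperOn (D : Set Ordinal) (a : Ordinal → Set ℕ) : Prop :=
  ∀ β ∈ D, ∀ F : Finset Ordinal, (∀ γ ∈ F, γ < β) → ¬ a β ⊆ unionFin a F

/-- `â_β = { α ≤ β : a α ∖ a β ⊆ ⋃_{γ∈F} a γ for some finite F ⊆ α }`. -/
def hatA (a : Ordinal → Set ℕ) (β : Ordinal) : Set Ordinal :=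
  { α | α ≤ β ∧ ∃ F : Finset Ordinal, (∀ γ ∈ F, γ < α) ∧ a α \ a β ⊆ unionFin a F }

/-- The topology `τ(A)` on `λ + 1 = {α : α ≤ λ}` generated by the subbase
consisting of the sets `â_β` and their complements, `β < λ`. -/
def tau (lam : Ordinal) (a : Ordinal → Set ℕ) :
    TopologicalSpace {α : Ordinal // α ≤ lam} :=
  TopologicalSpace.generateFrom
    { s | ∃ β < lam, s = {x : {α : Ordinal // α ≤ lam} | x.1 ∈ hatA a β} ∨
                     s = {x : {α : Ordinal // α ≤ lam} | x.1 ∈ hatA a β}ᶜ }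

/-- The subspace `ω₁ = {α : α < ω₁}` of `(ω₁+1, τ(A))`. -/
def tauSub (a : Ordinal → Set ℕ) : TopologicalSpace {y : Ordinal // y < omega1} :=
  TopologicalSpace.induced
    (fun y : {y : Ordinal // y < omega1} => (⟨y.1, y.2.le⟩ : {α : Ordinal // α ≤ omega1}))
    (tau omega1 a)

/-- Closed unbounded subsets of `ω₁`. -/
def IsClubOmega1 (C : Set Ordinal) : Prop :=
  C ⊆ Iio omega1 ∧
  (∀ α < omega1, ∃ β ∈ C, α ≤ β) ∧
  (∀ δ, δ < omega1 → δ ≠ 0 → (∀ α < δ, ∃ β ∈ C, α < β ∧ β < δ) → δ ∈ C)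

/-- Stationary subsets of `ω₁`: sets meeting every club. -/
def IsStationaryOmega1 (S : Set Ordinal) : Prop :=
  ∀ C : Set Ordinal, IsClubOmega1 C → (S ∩ C).Nonempty

/-- The stationary covering property for a coherent sequence whose index domain is `D`:
if the sequence has length `ω₁` (i.e. `Iio ω₁ ⊆ D`), then every stationary `S ⊆ ω₁`
together with some finite `F` covers, i.e. `⋃_{γ ∈ S ∪ F} â_γ = ω₁`.  (Sequences of
length `< ω₁` have the ScP by convention.) -/
def HasScP (D : Set Ordinal) (a : Ordinal → Set ℕ) : Prop :=
  Iio omega1 ⊆ D →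
    ∀ S : Set Ordinal, S ⊆ Iio omega1 → IsStationaryOmega1 S →
      ∃ F : Finset Ordinal, (⋃ γ ∈ S ∪ (↑F : Set Ordinal), hatA a γ) = Iio omega1

/-- A node of the tree `2^{≤ω₁}`: a function `val` defined on the ordinals `< len`
(with the canonical value `false` beyond `len`). -/
structure Node where
  len : Ordinal
  val : Ordinal → Bool
  canon : ∀ α, len ≤ α → val α = false

open Classical in
/-- The restriction `x ↾ β`. -/
def Node.restrict (x : Node) (β : Ordinal) : Node where
  len := β
  val := fun α => if α < β then x.val α else false
  canon := fun α h => if_neg (not_lt.2 h)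

/-- `τ.Extends σ` means `σ ⊆ τ`, i.e. `τ` extends `σ`. -/
def Node.Extends (τ σ : Node) : Prop :=
  σ.len ≤ τ.len ∧ ∀ α < σ.len, τ.val α = σ.val α

/-- Successor ordinals. -/
def IsSucc (o : Ordinal) : Prop := ∃ β, o = β + 1

open Classical in
/-- `σ†`: if `σ` has successor length `β+1`, the node agreeing with `σ` except at `β`;
otherwise `σ` itself. -/
def Node.dagger (σ : Node) : Node :=
  if h : IsSucc σ.len then
    { len := σ.len
      val := fun α => if α = Classical.choose h then !(σ.val α) else σ.val α
      canon := by
        intro α hα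
        have hs := Classical.choose_spec h
        have hne : α ≠ Classical.choose h := by
          intro he
          rw [hs, he] at hα
          rw [Ordinal.add_one_eq_succ] at hα
          exact (not_le.2 (Order.lt_succ (Classical.choose h))) hα
        show (if α = Classical.choose h then !(σ.val α) else σ.val α) = false
        rw [if_neg hne]
        exact σ.canon α hα }
  else σ

open Classical in
/-- `σ ⌢ b` : the node `σ` extended by one value `b`. -/
def Node.snoc (σ : Node) (b : Bool) : Node where
  len := σ.len + 1
  val := fun α => if α = σ.len then b else σ.val α
  canon := by
    intro α hα
    have h1 : σ.len < α := by
      have h2 : σ.len < σ.len + 1 := by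
        rw [Ordinal.add_one_eq_succ]; exact Order.lt_succ σ.len
      exact lt_of_lt_of_le h2 hα
    show (if α = σ.len then b else σ.val α) = false
    rw [if_neg h1.ne']
    exact σ.canon α h1.le

open Classical in
/-- `x ⌢ σ` : concatenation of nodes. -/
def Node.append (x σ : Node) : Node where
  len := x.len + σ.len
  val := fun α => if α < x.len then x.val α else σ.val (α - x.len)
  canon := by
    intro α hα
    have h1 : ¬ α < x.len := not_lt.2 (le_trans (le_self_add : x.len ≤ x.len + σ.len) hα)
    show (if α < x.len then x.val α else σ.val (α - x.len)) = false
    rw [if_neg h1]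
    apply σ.canon
    by_contra h2
    rw [not_le] at h2
    have h3 : α ≤ x.len + (α - x.len) := Ordinal.le_add_sub α x.len
    have h4 : x.len + (α - x.len) < x.len + σ.len := (add_lt_add_iff_left x.len).2 h2
    exact absurd hα (not_le.2 (lt_of_le_of_lt h3 h4))

/-- A subtree of `2^{<ω₁}` that is downward closed, twinned and has no maximal elements. -/
structure GoodTree (Γ : Set Node) : Prop where
  lt_omega1 : ∀ σ ∈ Γ, σ.len < omega1
  downward : ∀ σ ∈ Γ, ∀ β ≤ σ.len, σ.restrict β ∈ Γ
  twinned : ∀ σ ∈ Γ, σ.dagger ∈ Γ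
  noMax : ∀ σ ∈ Γ, ∃ τ ∈ Γ, σ.len < τ.len ∧ τ.Extends σ

/-- `X(Γ)`: the maximal branches of `Γ`, i.e. the minimal elements of `2^{≤ω₁} ∖ Γ`. -/
def XGamma (Γ : Set Node) : Set Node :=
  { x | x.len ≤ omega1 ∧ x ∉ Γ ∧ ∀ β < x.len, x.restrict β ∈ Γ }

/-- The index domain of the branch sequence `A_{Γ,x}`. -/
def branchDomain (Γ : Set Node) (x : Node) : Set Ordinal :=
  { α | α + 1 ≤ x.len ∧ x.restrict (α + 1) ∈ Γ }

/-- The branch sequence `A_{Γ,x}`, `a^x_α = a_{x ↾ (α+1)}`. -/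
def branchSeq (a : Node → Set ℕ) (x : Node) : Ordinal → Set ℕ :=
  fun α => a (x.restrict (α + 1))

/-- A `𝕋`-algebra on the tree `Γ`. -/
structure IsTAlgebra (Γ : Set Node) (a : Node → Set ℕ) : Prop where
  tree : GoodTree Γ
  empty_of_not_succ : ∀ σ ∈ Γ, ¬ IsSucc σ.len → a σ = ∅
  compl_dagger : ∀ σ ∈ Γ, IsSucc σ.len → a σ.dagger = (a σ)ᶜ
  branch_coherent : ∀ x : Node, x.len ≤ omega1 →
    CoherentOn (branchDomain Γ x) (branchSeq a x)
  branch_proper : ∀ x : Node, x.len ≤ omega1 →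
    ProperOn (branchDomain Γ x) (branchSeq a x)

/-- The Boolean subalgebra of `P(ℕ)` generated by a family `G`. -/
inductive GenBool (G : Set (Set ℕ)) : Set ℕ → Prop
  | basic (s : Set ℕ) : s ∈ G → GenBool G s
  | empty : GenBool G ∅
  | compl (s : Set ℕ) : GenBool G s → GenBool G sᶜ
  | inter (s t : Set ℕ) : GenBool G s → GenBool G t → GenBool G (s ∩ t)

/-- `B_Γ`: the Boolean subalgebra of `P(ℕ)` generated by `{a_σ : σ ∈ Γ}`. -/
def BGamma (Γ : Set Node) (a : Node → Set ℕ) : Set (Set ℕ) :=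
  { b | GenBool { s | ∃ σ ∈ Γ, s = a σ } b }

/-- A finite intersection from the family `{ℕ ∖ a_{x↾(α+1)} : α + 1 ≤ λ_x}`. -/
def finInterCompl (a : Node → Set ℕ) (x : Node) (F : Finset Ordinal) : Set ℕ :=
  ⋂ α ∈ F, (a (x.restrict (α + 1)))ᶜ

/-- The ultrafilter `U_x` on `B_Γ` generated by the finite intersections of
`{ℕ ∖ a_{x↾(α+1)} : α + 1 ≤ λ_x}`. -/
def Ux (Γ : Set Node) (a : Node → Set ℕ) (x : Node) : Set (Set ℕ) :=
  { b | b ∈ BGamma Γ a ∧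
    ∃ F : Finset Ordinal, (∀ α ∈ F, α + 1 ≤ x.len) ∧ finInterCompl a x F ⊆ b }

/-- The Stone topology on `X(Γ)`, with subbasic open sets `{z : b ∈ U_z}`, `b ∈ B_Γ`. -/
def stoneTop (Γ : Set Node) (a : Node → Set ℕ) :
    TopologicalSpace {z : Node // z ∈ XGamma Γ} :=
  TopologicalSpace.generateFrom
    { s | ∃ b ∈ BGamma Γ a, s = { z : {z : Node // z ∈ XGamma Γ} | b ∈ Ux Γ a z.1 } }

/-- An ultrafilter on a Boolean subalgebra `B` of `P(ℕ)`. -/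
def IsUltrafilterOn (B U : Set (Set ℕ)) : Prop :=
  U ⊆ B ∧
  (∀ s ∈ U, ∀ t ∈ U, s ∩ t ∈ U) ∧
  (∀ s ∈ U, ∀ t ∈ B, s ⊆ t → t ∈ U) ∧
  ∅ ∉ U ∧
  (∀ b ∈ B, Xor' (b ∈ U) (bᶜ ∈ U))

/-- The length-lexicographic (strict) order on finite binary strings. -/
def LenLexLT (σ τ : Node) : Prop :=
  σ.len < τ.len ∨ (σ.len = τ.len ∧ ∃ i < σ.len, σ.val i = false ∧ τ.val i = true ∧
    ∀ j < i, σ.val j = τ.val j)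

/-- `e` is the standard length-lexicographic enumeration of `2^{<ω}`. -/
def IsStdEnum (e : ℕ → Node) : Prop :=
  (∀ k, (e k).len < Ordinal.omega0) ∧
  (∀ σ : Node, σ.len < Ordinal.omega0 → ∃ k, e k = σ) ∧
  (∀ k l : ℕ, k < l → LenLexLT (e k) (e l))

/-- `⋃_{k<n} c^x_k` where `c^x_n = a^x_{e(n)} ∖ ⋃_{k<n} c^x_k` (recursively). -/
def cUnion (a : Node → Set ℕ) (x : Node) (eb : ℕ → Ordinal) : ℕ → Set ℕ
  | 0 => ∅
  | n + 1 => cUnion a x eb n ∪ (a (x.restrict (eb n + 1)) \ cUnion a x eb n)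

/-- `c^x_n = a^x_{e(n)} ∖ ⋃_{k<n} c^x_k`. -/
def cSeq (a : Node → Set ℕ) (x : Node) (eb : ℕ → Ordinal) (n : ℕ) : Set ℕ :=
  a (x.restrict (eb n + 1)) \ cUnion a x eb n

/-- `{x ⌢ σ : σ ∈ 2^{<ω}}`. -/
def appendSet (x : Node) : Set Node :=
  { τ | ∃ σ : Node, σ.len < Ordinal.omega0 ∧ τ = x.append σ }

/-- The defining equations of the extension `A_Γ[π,x]`:
`a_x = ∅`, `a_{x⌢(σ⌢0)} = ⋃{c^x_k : σ⌢1 ⊆ σ_{π(k)}}`, `a_{x⌢(σ⌢1)} = ℕ ∖ a_{x⌢(σ⌢0)}`. -/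
def ExtEquations (e : ℕ → Node) (π : ℕ → ℕ) (a : Node → Set ℕ) (x : Node)
    (eb : ℕ → Ordinal) (a' : Node → Set ℕ) : Prop :=
  a' x = ∅ ∧
  ∀ σ : Node, σ.len < Ordinal.omega0 →
    (a' (x.append (σ.snoc false)) =
      ⋃ k ∈ { k : ℕ | (e (π k)).Extends (σ.snoc true) }, cSeq a x eb k) ∧
    (a' (x.append (σ.snoc true)) = (a' (x.append (σ.snoc false)))ᶜ)

/-- The full tree `2^{<ω₁}`. -/
def GammaFull : Set Node := { σ | σ.len < omega1 }

theorem natLtOmega1 (n : ℕ) : (n : Ordinal) < omega1 := by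
  have h1 : (n : Ordinal) < Ordinal.omega0 := Ordinal.nat_lt_omega0 n
  have h2 : Ordinal.omega0 < omega1 := by
    rw [omega1, ← Cardinal.ord_aleph0]
    exact Cardinal.ord_lt_ord.2 (by rw [← Cardinal.aleph_zero]
                                    exact Cardinal.aleph_lt_aleph.2 zero_lt_one)
  exact h1.trans h2


/-- Countable compactness via accumulation points of countably infinite subsets. -/
def CountablyCompactAcc (X : Type*) (t : TopologicalSpace X) : Prop :=
  ∀ D : Set X, D.Countable → D.Infinite →
    ∃ p : X, ∀ U : Set X, t.IsOpen U → p ∈ U → ∃ q ∈ D, q ≠ p ∧ q ∈ U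

/-!
The sets `â_β` and their complements separate the points of each `Y_x`, because
`β ∈ â_β ⊆ [0, β]`; so the product is T₁, and it suffices to find around every point `p` an open
set containing only finitely many `n̄`. If some coordinate `p x` is a natural number `m`, the set
`{q : q x ∈ â_m}` contains `n̄` only for `n ≤ m`.

Otherwise every coordinate of `p` is at least `ω`, and there are branches `x, y ⊇ r` that
split at `δ := p x = p y`. Were there none, let `z ⊇ r` take, at each level `δ ≥ ω`, the
value `false` exactly when some branch through `z ↾ δ` with `p`-value `δ` takes the value
`true` at `δ`; at `δ = p z`, `z` would then either split from such a branch or be one itself.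
For a split pair, `a^y_δ = ℕ ∖ a^x_δ` while `a^y_α = a^x_α` for `α < δ`; so an `α < δ` lying in
both `â^x_δ` and `â^y_δ` would put `a^x_α` inside a finite union of earlier terms, against
properness. Hence the open set `{q : q x ∈ â^x_δ, q y ∈ â^y_δ}` contains `p` and no `n̄`.
-/

open Topology

theorem omega0_lt_omega1 : Ordinal.omega0 < omega1 := by
  rw [omega1, Cardinal.ord_aleph]
  exact Ordinal.omega0_lt_omega_one

theorem add_one_lt_omega1 {δ : Ordinal} (h : δ < omega1) : δ + 1 < omega1 :=
  (Cardinal.isSuccLimit_ord (Cardinal.aleph0_le_aleph 1)).add_one_lt h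

theorem mem_hatA_self (b : Ordinal → Set ℕ) (β : Ordinal) : β ∈ hatA b β :=
  ⟨le_rfl, ∅, by simp, by simp⟩

theorem unionFin_union (b : Ordinal → Set ℕ) (F G : Finset Ordinal) :
    unionFin b (F ∪ G) = unionFin b F ∪ unionFin b G :=
  Finset.set_biUnion_union F G b

theorem unionFin_congr {b b' : Ordinal → Set ℕ} {F : Finset Ordinal}
    (h : ∀ γ ∈ F, b γ = b' γ) : unionFin b F = unionFin b' F :=
  iUnion₂_congr h

namespace Node

theorem ext {x y : Node} (hlen : x.len = y.len) (hval : x.val = y.val) : x = y := by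
  cases x
  cases y
  cases hlen
  cases hval
  rfl

def SplitAt (x y : Node) (δ : Ordinal) : Prop :=
  (∀ γ < δ, x.val γ = y.val γ) ∧ x.val δ ≠ y.val δ

theorem restrict_eq_of_forall_lt {x y : Node} {δ β : Ordinal}
    (h : ∀ γ < δ, x.val γ = y.val γ) (hβ : β ≤ δ) : x.restrict β = y.restrict β := by
  refine Node.ext rfl (funext fun γ => ?_)
  simp only [restrict]
  split_ifs with hγ
  · exact h γ (hγ.trans_le hβ)
  · rfl

theorem SplitAt.restrict_add_one {x y : Node} {δ : Ordinal} (h : x.SplitAt y δ) :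
    y.restrict (δ + 1) = (x.restrict (δ + 1)).dagger := by
  have hs : IsSucc (x.restrict (δ + 1)).len := ⟨δ, rfl⟩
  rw [dagger, dif_pos hs]
  refine Node.ext rfl (funext fun γ => ?_)
  simp only [restrict, Order.lt_add_one_iff]
  rcases lt_trichotomy γ δ with hγ | rfl | hγ
  · simp [hγ.ne, hγ.le, h.1 γ hγ]
  · simpa using (Bool.eq_not_of_ne h.2).symm
  · simp [hγ.ne', not_le.2 hγ]

end Node

theorem branchSeq_eq_of_forall_lt (a : Node → Set ℕ) {x y : Node} {δ α : Ordinal}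
    (h : ∀ γ < δ, x.val γ = y.val γ) (hα : α < δ) : branchSeq a x α = branchSeq a y α :=
  congrArg a (Node.restrict_eq_of_forall_lt h (Order.add_one_le_of_lt hα))

theorem IsTAlgebra.hatA_inter_hatA_subset {a : Node → Set ℕ} (hT : IsTAlgebra GammaFull a)
    {x y : Node} {δ : Ordinal} (hx : x.len ≤ omega1) (hδ : δ < x.len) (hxy : x.SplitAt y δ) :
    hatA (branchSeq a x) δ ∩ hatA (branchSeq a y) δ ⊆ {δ} := by
  rintro α ⟨⟨hαδ, F, hF, hFx⟩, -, G, hG, hGy⟩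
  by_contra hne
  have hα : α < δ := lt_of_le_of_ne hαδ hne
  have hδ₁ : δ < omega1 := hδ.trans_le hx
  have hcompl : branchSeq a y δ = (branchSeq a x δ)ᶜ := by
    rw [branchSeq, branchSeq, hxy.restrict_add_one]
    exact hT.compl_dagger _ (add_one_lt_omega1 hδ₁) ⟨δ, rfl⟩
  have hαeq : branchSeq a y α = branchSeq a x α := (branchSeq_eq_of_forall_lt a hxy.1 hα).symm
  have hGeq : unionFin (branchSeq a y) G = unionFin (branchSeq a x) G :=
    unionFin_congr fun γ hγ => (branchSeq_eq_of_forall_lt a hxy.1 ((hG γ hγ).trans hα)).symm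
  refine hT.branch_proper x hx α
    ⟨Order.add_one_le_of_lt (hα.trans hδ), add_one_lt_omega1 (hα.trans hδ₁)⟩ (F ∪ G)
    (fun γ hγ => (Finset.mem_union.1 hγ).elim (hF γ) (hG γ)) fun s hs => ?_
  rw [unionFin_union]
  by_cases hsδ : s ∈ branchSeq a x δ
  · right
    rw [← hGeq]
    exact hGy ⟨hαeq ▸ hs, by rw [hcompl]; exact not_not.2 hsδ⟩
  · exact Or.inl (hFx ⟨hs, hsδ⟩)

def branchOf (g : Ordinal → Bool) : Node where
  len := omega1
  val γ := if γ < omega1 then g γ else false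
  canon _ h := if_neg (not_lt.2 h)

theorem branchOf_val (g : Ordinal → Bool) {γ : Ordinal} (h : γ < omega1) :
    (branchOf g).val γ = g γ :=
  if_pos h

theorem branchOf_extends {g : Ordinal → Bool} {r : Node} (hr : r.len ≤ omega1)
    (hg : ∀ γ < r.len, g γ = r.val γ) : (branchOf g).Extends r :=
  ⟨hr, fun γ hγ => (branchOf_val g (hγ.trans_le hr)).trans (hg γ hγ)⟩

/-- The index set `X_r` of the product. -/
abbrev Branches (r : Node) :=
  {x : Node // x.len = omega1 ∧ x.Extends r}

theorem Branches.nonempty {r : Node} (hr : r.len ≤ omega1) : Nonempty (Branches r) :=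
  ⟨⟨branchOf r.val, rfl, branchOf_extends hr fun _ _ => rfl⟩⟩

theorem Branches.exists_splitAt_eq {r : Node} (hr : r.len ≤ omega1) (p : Branches r → Ordinal)
    (hp : ∀ x, r.len ≤ p x ∧ p x < omega1) :
    ∃ x y : Branches r, p x = p y ∧ x.1.SplitAt y.1 (p x) := by
  classical
  by_contra! hno
  let F : ∀ δ : Ordinal, (∀ γ < δ, Bool) → Bool := fun δ g =>
    if δ < r.len then r.val δ
    else if ∃ x : Branches r, (∀ γ (hγ : γ < δ), x.1.val γ = g γ hγ) ∧ x.1.val δ = true ∧ p x = δ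
      then false else true
  let f : Ordinal → Bool := Ordinal.lt_wf.fix F
  have hf : ∀ δ, f δ = F δ fun γ _ => f γ := Ordinal.lt_wf.fix_eq F
  let z : Branches r :=
    ⟨branchOf f, rfl, branchOf_extends hr fun γ hγ => by rw [hf]; exact if_pos hγ⟩
  have hz : ∀ γ < p z, z.1.val γ = f γ := fun γ hγ => branchOf_val f (hγ.trans (hp z).2)
  have hzδ : z.1.val (p z) = f (p z) := branchOf_val f (hp z).2
  have hfδ := hf (p z)
  simp only [F, if_neg (not_lt.2 (hp z).1)] at hfδ
  split_ifs at hfδ with hex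
  · obtain ⟨y, hy, hyδ, hpy⟩ := hex
    exact hno z y hpy.symm
      ⟨fun γ hγ => (hz γ hγ).trans (hy γ hγ).symm, by rw [hzδ, hfδ, hyδ]; decide⟩
  · exact hex ⟨z, hz, hzδ.trans hfδ, rfl⟩

theorem isOpen_tauSub_hatA (b : Ordinal → Set ℕ) {β : Ordinal} (hβ : β < omega1) :
    IsOpen[tauSub b] {y | y.1 ∈ hatA b β} :=
  @isOpen_induced _ _ (tau omega1 b) _ _
    (TopologicalSpace.isOpen_generateFrom_of_mem ⟨β, hβ, Or.inl rfl⟩)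

theorem isOpen_tauSub_compl_hatA (b : Ordinal → Set ℕ) {β : Ordinal} (hβ : β < omega1) :
    IsOpen[tauSub b] {y | y.1 ∉ hatA b β} :=
  @isOpen_induced _ _ (tau omega1 b) _ _
    (TopologicalSpace.isOpen_generateFrom_of_mem ⟨β, hβ, Or.inr rfl⟩)

theorem t1Space_tauSub (b : Ordinal → Set ℕ) : @T1Space _ (tauSub b) := by
  let := tauSub b
  refine t1Space_iff_exists_open.2 fun x y hxy => ?_
  rcases lt_or_gt_of_ne (Subtype.coe_ne_coe.2 hxy) with h | h
  · exact ⟨_, isOpen_tauSub_hatA b x.2, mem_hatA_self b x.1, fun hy => h.not_ge hy.1⟩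
  · exact ⟨_, isOpen_tauSub_compl_hatA b y.2, fun hx => h.not_ge hx.1,
      not_not.2 (mem_hatA_self b y.1)⟩

section PiTauSub

variable {ι : Type*} (b : ι → Ordinal → Set ℕ)

abbrev piTauSub : TopologicalSpace (ι → {y : Ordinal // y < omega1}) :=
  @Pi.topologicalSpace _ _ fun i => tauSub (b i)

theorem t1Space_piTauSub : @T1Space _ (piTauSub b) := by
  let := fun i => tauSub (b i)
  have := fun i => t1Space_tauSub (b i)
  infer_instance

theorem isOpen_piTauSub_hatA (i : ι) {β : Ordinal} (hβ : β < omega1) :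
    IsOpen[piTauSub b] {q | (q i).1 ∈ hatA (b i) β} :=
  @IsOpen.preimage _ _ (piTauSub b) (tauSub (b i)) _
    (@continuous_apply _ _ (fun i => tauSub (b i)) i) _ (isOpen_tauSub_hatA (b i) hβ)

def constNat (ι : Type*) (n : ℕ) : ι → {y : Ordinal // y < omega1} :=
  fun _ => ⟨n, natLtOmega1 n⟩

theorem constNat_injective [Nonempty ι] : Function.Injective (constNat ι) := fun _ _ h =>
  Nat.cast_injective (congrArg Subtype.val (congrFun h (Classical.arbitrary ι)))

theorem exists_isOpen_finite_constNat_of_lt_omega0 {p : ι → {y : Ordinal // y < omega1}} {i : ι}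
    (hp : (p i).1 < Ordinal.omega0) :
    ∃ V, IsOpen[piTauSub b] V ∧ p ∈ V ∧ {n | constNat ι n ∈ V}.Finite := by
  obtain ⟨m, hm⟩ := Ordinal.lt_omega0.1 hp
  refine ⟨_, isOpen_piTauSub_hatA b i (p i).2, mem_hatA_self _ _,
    (Set.finite_Iic m).subset fun n hn => ?_⟩
  have hn : (n : Ordinal) ≤ m := hm ▸ hn.1
  exact_mod_cast hn

end PiTauSub

theorem exists_isOpen_forall_mem_imp_eq {X : Type*} [TopologicalSpace X] [T1Space X]
    {c : ℕ → X} {p : X} {V : Set X} (hV : IsOpen V) (hpV : p ∈ V)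
    (hfin : {n | c n ∈ V}.Finite) : ∃ U, IsOpen U ∧ p ∈ U ∧ ∀ n, c n ∈ U → c n = p := by
  refine ⟨V \ (c '' {n | c n ∈ V} \ {p}), hV.sdiff ((hfin.image c).sdiff).isClosed,
    ⟨hpV, fun h => h.2 rfl⟩, fun n hn => ?_⟩
  by_contra hne
  exact hn.2 ⟨⟨n, hn.1, rfl⟩, hne⟩

theorem not_countablyCompactAcc_of_injective {X : Type*} (t : TopologicalSpace X) {c : ℕ → X}
    (hc : Function.Injective c) (h : ∀ p, ∃ U, IsOpen[t] U ∧ p ∈ U ∧ ∀ n, c n ∈ U → c n = p) :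
    ¬ CountablyCompactAcc X t := by
  intro hcc
  obtain ⟨p, hp⟩ := hcc _ (countable_range c) (infinite_range_of_injective hc)
  obtain ⟨U, hU, hpU, hUc⟩ := h p
  obtain ⟨_, ⟨n, rfl⟩, hne, hnU⟩ := hp U hU hpU
  exact hne (hUc n hnU)

section Branches

variable {a : Node → Set ℕ} {r : Node}

theorem exists_isOpen_constNat_notMem (hT : IsTAlgebra GammaFull a)
    (hr : r.len = Ordinal.omega0) {p : Branches r → {y : Ordinal // y < omega1}}
    (hp : ∀ x, Ordinal.omega0 ≤ (p x).1) :
    ∃ V, IsOpen[piTauSub fun x : Branches r => branchSeq a x.1] V ∧ p ∈ V ∧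
      ∀ n, constNat _ n ∉ V := by
  let := piTauSub fun x : Branches r => branchSeq a x.1
  obtain ⟨x, y, hpxy, hxy⟩ := Branches.exists_splitAt_eq (hr ▸ omega0_lt_omega1.le)
    (fun x => (p x).1) fun x => ⟨hr ▸ hp x, (p x).2⟩
  refine ⟨{q | (q x).1 ∈ hatA (branchSeq a x.1) (p x).1} ∩
      {q | (q y).1 ∈ hatA (branchSeq a y.1) (p x).1},
    (isOpen_piTauSub_hatA _ x (p x).2).inter (isOpen_piTauSub_hatA _ y (p x).2),
    ⟨mem_hatA_self _ _, by
      show (p y).1 ∈ hatA _ (p x).1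
      rw [hpxy]
      exact mem_hatA_self _ _⟩, fun n hn => ?_⟩
  have hδ : (n : Ordinal) = (p x).1 :=
    hT.hatA_inter_hatA_subset x.2.1.le ((p x).2.trans_eq x.2.1.symm) hxy hn
  exact (Ordinal.natCast_lt_omega0 n).not_ge ((hp x).trans_eq hδ.symm)

theorem exists_isOpen_constNat_mem_imp_eq (hT : IsTAlgebra GammaFull a)
    (hr : r.len = Ordinal.omega0) (p : Branches r → {y : Ordinal // y < omega1}) :
    ∃ U, IsOpen[piTauSub fun x : Branches r => branchSeq a x.1] U ∧ p ∈ U ∧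
      ∀ n, constNat _ n ∈ U → constNat _ n = p := by
  let := piTauSub fun x : Branches r => branchSeq a x.1
  have := t1Space_piTauSub fun x : Branches r => branchSeq a x.1
  obtain ⟨V, hV, hpV, hfin⟩ : ∃ V, IsOpen V ∧ p ∈ V ∧ {n | constNat _ n ∈ V}.Finite := by
    by_cases h : ∃ x, (p x).1 < Ordinal.omega0
    · obtain ⟨x, hx⟩ := h
      exact exists_isOpen_finite_constNat_of_lt_omega0 _ hx
    · push Not at h
      obtain ⟨V, hV, hpV, hn⟩ := exists_isOpen_constNat_notMem hT hr h
      exact ⟨V, hV, hpV, by simp [hn]⟩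
  exact exists_isOpen_forall_mem_imp_eq hV hpV hfin

end Branches

/-- For a `𝕋`-algebra on `2^{<ω₁}` and `r ∈ 2^ω`, the set `{n̄ : n ∈ ℕ}` of constant
functions has no accumulation point in the product `∏_{x ∈ X_r} Y_x`; in particular
this product is not countably compact. -/
theorem stmt17 (a : Node → Set ℕ) (hT : IsTAlgebra GammaFull a)
    (r : Node) (hr : r.len = Ordinal.omega0) :
    (∀ p : (x : {x : Node // x.len = omega1 ∧ x.Extends r}) → {y : Ordinal // y < omega1},
      ∃ U : Set ((x : {x : Node // x.len = omega1 ∧ x.Extends r}) → {y : Ordinal // y < omega1}),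
        @IsOpen _ (@Pi.topologicalSpace _ _ (fun x => tauSub (branchSeq a x.1))) U ∧
        p ∈ U ∧
        ∀ n : ℕ,
          (fun _ => (⟨(n : Ordinal), natLtOmega1 n⟩ : {y : Ordinal // y < omega1})) ∈ U →
          (fun _ => (⟨(n : Ordinal), natLtOmega1 n⟩ : {y : Ordinal // y < omega1})) = p) ∧
    ¬ CountablyCompactAcc
        ((x : {x : Node // x.len = omega1 ∧ x.Extends r}) → {y : Ordinal // y < omega1})
        (@Pi.topologicalSpace _ _ (fun x => tauSub (branchSeq a x.1))) := by
  have hsep := exists_isOpen_constNat_mem_imp_eq hT hr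
  have := Branches.nonempty (hr ▸ omega0_lt_omega1.le)
  exact ⟨hsep, not_countablyCompactAcc_of_injective _ constNat_injective hsep⟩

end
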